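/- arXiv:2112.01175 — 6 statements merged into one kernel-verified Lean document; each statement's English description precedes it below -/
import Mathlib

section
/- Let (X, μ) be a finite measure space, and let (T_t)_{t∈ℝ} be a flow of measurable, measure-preserving bijections of X (T_0 = id, T_{t+s} = T_t ∘ T_s, and each T_t preserves μ). Let C > 0 and let ρ₀ : X → ℝ be measurable with 0 ≤ ρ₀ ≤ C and ∫_X ρ₀ dμ = 1; for t ∈ ℝ set ρ_t(x) = ρ₀(T_{−t} x), and assume (t,x) ↦ ρ₀(T_{−t}x) is jointly measurable. Suppose ρ̄ : X → ℝ is measurable and for μ-a.e. x ∈ X, (1/T)·∫_1^{1+T} ρ_t(x) dt → ρ̄(x) as T → ∞. Then S_G(ρ₀) ≤ S_G(ρ̄), i.e. −∫_X ρ₀ log ρ₀ dμ ≤ −∫_X ρ̄ log ρ̄ dμ (Penrose–Gibbs theorem). -/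
/-!
Write `φ u = u log u` and `A_τ` for the time average of `ρ_t` over `[1, 1 + τ]`. Since `φ` is
convex, Jensen's inequality gives `φ (A_τ x) ≤ ⨍ φ (ρ_t x) dt`; integrating over `X` and
exchanging the integrals, each `∫ φ ∘ ρ_t dμ` equals `∫ φ ∘ ρ₀ dμ` because the flow preserves `μ`.
So `∫ φ ∘ A_τ dμ ≤ ∫ φ ∘ ρ₀ dμ` for every `τ > 0`, and as all densities take values in `[0, C]`,
where `φ` is bounded, dominated convergence lets `τ → ∞`.
-/

open MeasureTheory Filter Real Set Topology

namespace MeasureTheory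

section

variable {X Y E ι : Type*} [MeasurableSpace X] [MeasurableSpace Y] {μ : Measure X}
  {ν : Measure Y} [NormedAddCommGroup E]

theorem integrable_of_forall_mem_isCompact [IsFiniteMeasure μ] {s : Set E} (hs : IsCompact s)
    {f : X → E} (hf : AEStronglyMeasurable f μ) (hfs : ∀ x, f x ∈ s) : Integrable f μ := by
  obtain ⟨M, hM⟩ := hs.isBounded.exists_norm_le
  exact Integrable.of_bound hf M (ae_of_all _ fun x => hM _ (hfs x))

theorem average_mem_of_forall_mem_isCompact [NormedSpace ℝ E] [CompleteSpace E]
    [IsFiniteMeasure ν] [NeZero ν] {s : Set E} (hs : IsCompact s) (hsc : Convex ℝ s) {g : Y → E}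
    (hg : AEStronglyMeasurable g ν) (hgs : ∀ y, g y ∈ s) : ⨍ y, g y ∂ν ∈ s :=
  hsc.average_mem hs.isClosed (ae_of_all _ hgs) (integrable_of_forall_mem_isCompact hs hg hgs)

theorem StronglyMeasurable.average_prod_left [NormedSpace ℝ E] [SFinite ν] {F : Y × X → E}
    (hF : StronglyMeasurable F) : StronglyMeasurable fun x => ⨍ y, F (y, x) ∂ν := by
  simp only [average_eq]
  exact hF.integral_prod_left'.const_smul _

theorem Integrable.average_prod_left [NormedSpace ℝ E] [SFinite μ] [SFinite ν] {F : X × Y → E}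
    (hF : Integrable F (μ.prod ν)) : Integrable (fun x => ⨍ y, F (x, y) ∂ν) μ := by
  simp only [average_eq]
  exact hF.integral_prod_left.smul _

theorem integral_average_comm [NormedSpace ℝ E] [SFinite μ] [SFinite ν] {G : X → Y → E}
    (hG : Integrable (Function.uncurry G) (μ.prod ν)) :
    ∫ x, ⨍ y, G x y ∂ν ∂μ = ⨍ y, ∫ x, G x y ∂μ ∂ν := by
  simp only [average_eq, integral_smul, integral_integral_swap hG]

theorem MeasurePreserving.integral_comp_of_aestronglyMeasurable [NormedSpace ℝ E] {T : X → Y}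
    (hT : MeasurePreserving T μ ν) {g : Y → E} (hg : AEStronglyMeasurable g ν) :
    ∫ x, g (T x) ∂μ = ∫ y, g y ∂ν := by
  rw [← integral_map hT.aemeasurable (hT.map_eq ▸ hg), hT.map_eq]

theorem tendsto_integral_comp_of_forall_mem_isCompact [NormedSpace ℝ E] [IsFiniteMeasure μ]
    {l : Filter ι} [l.IsCountablyGenerated] {s : Set ℝ} (hs : IsCompact s) {φ : ℝ → E}
    (hφ : Continuous φ) {F : ι → X → ℝ} {g : X → ℝ}
    (hF : ∀ᶠ i in l, AEStronglyMeasurable (F i) μ) (hFs : ∀ᶠ i in l, ∀ x, F i x ∈ s)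
    (hlim : ∀ᵐ x ∂μ, Tendsto (fun i => F i x) l (𝓝 (g x))) :
    Tendsto (fun i => ∫ x, φ (F i x) ∂μ) l (𝓝 (∫ x, φ (g x) ∂μ)) := by
  obtain ⟨M, hM⟩ := (hs.image hφ).isBounded.exists_norm_le
  refine tendsto_integral_filter_of_dominated_convergence (fun _ => M) ?_ ?_
    (integrable_const M) ?_
  · filter_upwards [hF] with i hi using hφ.comp_aestronglyMeasurable hi
  · filter_upwards [hFs] with i hi using ae_of_all _ fun x => hM _ (mem_image_of_mem φ (hi x))
  · filter_upwards [hlim] with x hx using (hφ.tendsto _).comp hx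

theorem integral_comp_average_le [IsFiniteMeasure μ] [IsFiniteMeasure ν] [NeZero ν]
    {s : Set ℝ} (hs : IsCompact s) {φ : ℝ → ℝ} (hφ : ConvexOn ℝ s φ) (hφc : Continuous φ)
    {T : Y → X → X} (hT : ∀ y, MeasurePreserving (T y) μ μ) {f : X → ℝ} (hf : Measurable f)
    (hfs : ∀ x, f x ∈ s) (hfT : Measurable fun p : Y × X => f (T p.1 p.2)) :
    ∫ x, φ (⨍ y, f (T y x) ∂ν) ∂μ ≤ ∫ x, φ (f x) ∂μ := by
  have hφs : IsCompact (φ '' s) := hs.image hφc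
  have hslice : ∀ x, AEStronglyMeasurable (fun y => f (T y x)) ν := fun x =>
    (hfT.comp (measurable_id.prodMk measurable_const)).aestronglyMeasurable
  have hφfT : Integrable (fun p : X × Y => φ (f (T p.2 p.1))) (μ.prod ν) :=
    integrable_of_forall_mem_isCompact hφs
      (hφc.measurable.comp (hfT.comp measurable_swap)).aestronglyMeasurable
      fun p => mem_image_of_mem φ (hfs _)
  have jensen : ∀ x, φ (⨍ y, f (T y x) ∂ν) ≤ ⨍ y, φ (f (T y x)) ∂ν := fun x =>
    hφ.map_average_le hφc.continuousOn hs.isClosed (ae_of_all _ fun y => hfs _)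
      (integrable_of_forall_mem_isCompact hs (hslice x) fun y => hfs _)
      (integrable_of_forall_mem_isCompact hφs (hφc.comp_aestronglyMeasurable (hslice x))
        fun y => mem_image_of_mem φ (hfs _))
  have hφavg : Integrable (fun x => φ (⨍ y, f (T y x) ∂ν)) μ :=
    integrable_of_forall_mem_isCompact hφs
      (hφc.comp_aestronglyMeasurable
        hfT.stronglyMeasurable.average_prod_left.aestronglyMeasurable)
      fun x => mem_image_of_mem φ
        (average_mem_of_forall_mem_isCompact hs hφ.1 (hslice x) fun y => hfs _)
  calc ∫ x, φ (⨍ y, f (T y x) ∂ν) ∂μ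
      ≤ ∫ x, ⨍ y, φ (f (T y x)) ∂ν ∂μ := integral_mono hφavg hφfT.average_prod_left jensen
    _ = ⨍ y, ∫ x, φ (f (T y x)) ∂μ ∂ν := integral_average_comm hφfT
    _ = ⨍ _y, ∫ x, φ (f x) ∂μ ∂ν := by
        congr 1 with y
        exact (hT y).integral_comp_of_aestronglyMeasurable
          (hφc.measurable.comp hf).aestronglyMeasurable
    _ = ∫ x, φ (f x) ∂μ := average_const _ _

end

end MeasureTheory

theorem penrose_gibbs_general
    {X : Type*} [MeasurableSpace X] (μ : Measure X) [IsFiniteMeasure μ]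
    (T : ℝ → X → X)
    (hTpres : ∀ t, MeasurePreserving (T t) μ μ)
    (C : ℝ)
    (ρ₀ : X → ℝ) (hρ₀meas : Measurable ρ₀)
    (hρ₀nonneg : ∀ x, 0 ≤ ρ₀ x) (hρ₀le : ∀ x, ρ₀ x ≤ C)
    (hjoint : Measurable fun p : ℝ × X => ρ₀ (T (-p.1) p.2))
    (ρbar : X → ℝ)
    (hconv : ∀ᵐ x ∂μ,
      Tendsto (fun τ : ℝ => (1 / τ) * ∫ t in Set.Icc (1:ℝ) (1 + τ), ρ₀ (T (-t) x))
        atTop (nhds (ρbar x))) :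
    -∫ x, ρ₀ x * Real.log (ρ₀ x) ∂μ ≤ -∫ x, ρbar x * Real.log (ρbar x) ∂μ := by
  have hρ₀C : ∀ x, ρ₀ x ∈ Icc 0 C := fun x => ⟨hρ₀nonneg x, hρ₀le x⟩
  have hφ : ConvexOn ℝ (Icc 0 C) fun u => u * log u :=
    convexOn_mul_log.subset Icc_subset_Ici_self (convex_Icc 0 C)
  set A : ℝ → X → ℝ := fun τ x => ⨍ t in Icc 1 (1 + τ), ρ₀ (T (-t) x)
  have hpos : ∀ τ : ℝ, 0 < τ → NeZero (volume.restrict (Icc (1:ℝ) (1 + τ))) := fun τ hτ =>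
    ⟨by simpa [Measure.restrict_eq_zero] using hτ⟩
  have hA : ∀ᶠ τ in atTop, ∀ x, (1 / τ) * ∫ t in Icc 1 (1 + τ), ρ₀ (T (-t) x) = A τ x := by
    filter_upwards [eventually_gt_atTop 0] with τ hτ x
    simp [A, setAverage_eq, hτ.le]
  have hle : ∀ᶠ τ in atTop, ∫ x, A τ x * log (A τ x) ∂μ ≤ ∫ x, ρ₀ x * log (ρ₀ x) ∂μ := by
    filter_upwards [eventually_gt_atTop 0] with τ hτ
    have := hpos τ hτ
    exact integral_comp_average_le isCompact_Icc hφ continuous_mul_log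
      (fun t => hTpres (-t)) hρ₀meas hρ₀C hjoint
  have hlim : Tendsto (fun τ => ∫ x, A τ x * log (A τ x) ∂μ) atTop
      (𝓝 (∫ x, ρbar x * log (ρbar x) ∂μ)) := by
    refine tendsto_integral_comp_of_forall_mem_isCompact (isCompact_Icc (a := 0) (b := C))
      continuous_mul_log
      (Eventually.of_forall fun τ =>
        hjoint.stronglyMeasurable.average_prod_left.aestronglyMeasurable) ?_ ?_
    · filter_upwards [eventually_gt_atTop 0] with τ hτ x
      have := hpos τ hτ
      exact average_mem_of_forall_mem_isCompact isCompact_Icc (convex_Icc 0 C)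
        (hjoint.comp (measurable_id.prodMk measurable_const)).aestronglyMeasurable fun t => hρ₀C _
    · filter_upwards [hconv] with x hx
      exact hx.congr' (hA.mono fun τ h => h x)
  exact neg_le_neg (le_of_tendsto hlim hle)

/-- **Penrose–Gibbs theorem.** Let `(X, μ)` be a finite measure space and `(T t)_{t ∈ ℝ}` a
flow of measurable, measure-preserving bijections of `X`.  Let `ρ₀` be a bounded nonnegative
measurable density integrating to `1`, evolved by `ρ_t x = ρ₀ (T (-t) x)`, and suppose the
time averages `(1/T) ∫_1^{1+T} ρ_t x dt` converge a.e. to a measurable function `ρ̄`.  Then the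
Gibbs entropy does not decrease: `-∫ ρ₀ log ρ₀ dμ ≤ -∫ ρ̄ log ρ̄ dμ`. -/
theorem penrose_gibbs
    {X : Type*} [MeasurableSpace X] (μ : Measure X) [IsFiniteMeasure μ]
    (T : ℝ → X → X)
    (hTmeas : ∀ t, Measurable (T t))
    (hTbij : ∀ t, Function.Bijective (T t))
    (hT0 : T 0 = id)
    (hTadd : ∀ t s : ℝ, T (t + s) = T t ∘ T s)
    (hTpres : ∀ t, MeasurePreserving (T t) μ μ)
    (C : ℝ) (hC : 0 < C)
    (ρ₀ : X → ℝ) (hρ₀meas : Measurable ρ₀)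
    (hρ₀nonneg : ∀ x, 0 ≤ ρ₀ x) (hρ₀le : ∀ x, ρ₀ x ≤ C)
    (hρ₀int : ∫ x, ρ₀ x ∂μ = 1)
    (hjoint : Measurable fun p : ℝ × X => ρ₀ (T (-p.1) p.2))
    (ρbar : X → ℝ) (hρbarmeas : Measurable ρbar)
    (hconv : ∀ᵐ x ∂μ,
      Tendsto (fun τ : ℝ => (1 / τ) * ∫ t in Set.Icc (1:ℝ) (1 + τ), ρ₀ (T (-t) x))
        atTop (nhds (ρbar x))) :
    -∫ x, ρ₀ x * Real.log (ρ₀ x) ∂μ ≤ -∫ x, ρbar x * Real.log (ρbar x) ∂μ :=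
  penrose_gibbs_general μ T hTpres C ρ₀ hρ₀meas hρ₀nonneg hρ₀le hjoint ρbar hconv
end

section
/- Fix a finite set Λ of lattice sites, a distinguished site x₀ ∈ Λ, and a symmetric coupling J : Λ → Λ → ℝ with J x x = 0 for all x. Let H = (1/2)·∑_{x∈Λ} ∑_{y∈Λ} J x y · σₓ³ σ_y³ be the generalized Ising (gIm) Hamiltonian and P = ∑_{y∈Λ} J x₀ y · σ_y³. Then for every t ∈ ℝ (exact solution of the gIm dynamics): exp(itH) · σ_{x₀}¹ · exp(−itH) = σ_{x₀}¹ · cos(2tP) − σ_{x₀}² · sin(2tP), where for a complex square matrix M one sets cos(M) = (exp(iM) + exp(−iM))/2 and sin(M) = (exp(iM) − exp(−iM))/(2i), with exp the matrix exponential. -/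
open Matrix Complex

noncomputable section

/-- The three Pauli matrices `σ¹, σ², σ³` (indexed by `Fin 3` as `0, 1, 2`). -/
def pauli : Fin 3 → Matrix (Fin 2) (Fin 2) ℂ :=
  ![!![0, 1; 1, 0], !![0, -I; I, 0], !![1, 0; 0, -1]]

/-- The Pauli operator `σₓᵏ` acting at the site `x` of the finite lattice `Λ`, as a matrix
indexed by spin configurations `Λ → Fin 2`. -/
def pauliAt {Λ : Type*} [Fintype Λ] [DecidableEq Λ] (x : Λ) (k : Fin 3) :
    Matrix (Λ → Fin 2) (Λ → Fin 2) ℂ :=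
  fun f g => if ∀ y, y ≠ x → f y = g y then pauli k (f x) (g x) else 0

/-- Cosine of a complex square matrix: `cos M = (exp(iM) + exp(-iM))/2`. -/
def mcos {n : Type*} [Fintype n] [DecidableEq n] (M : Matrix n n ℂ) : Matrix n n ℂ :=
  (2 : ℂ)⁻¹ • (NormedSpace.exp (I • M) + NormedSpace.exp ((-I) • M))

/-- Sine of a complex square matrix: `sin M = (exp(iM) - exp(-iM))/(2i)`. -/
def msin {n : Type*} [Fintype n] [DecidableEq n] (M : Matrix n n ℂ) : Matrix n n ℂ :=
  (2 * I)⁻¹ • (NormedSpace.exp (I • M) - NormedSpace.exp ((-I) • M))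

/-- The generalized Ising model Hamiltonian `H = (1/2) ∑_{x,y ∈ Λ} J x y · σₓ³ σ_y³`. -/
def gImHamiltonian {Λ : Type*} [Fintype Λ] [DecidableEq Λ] (J : Λ → Λ → ℝ) :
    Matrix (Λ → Fin 2) (Λ → Fin 2) ℂ :=
  (2 : ℂ)⁻¹ • ∑ x : Λ, ∑ y : Λ, (J x y : ℂ) • (pauliAt x 2 * pauliAt y 2)

/-! In the eigenbasis of the `σ³`'s both `H` and `P` are diagonal, so conjugation by `exp(itH)`
multiplies the `(f, g)` entry of `σ¹_{x₀}` by `exp(it(E f - E g))`, where `E` is the classical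
Ising energy. The entry is nonzero only when `f` is `g` with the spin `s` at `x₀` flipped, and
then `E f - E g = -2 s P(g)`: the symmetry of `J` doubles the linear term of the quadratic form and
`J x₀ x₀ = 0` kills the quadratic one. The resulting phase `exp(-2it s P) = cos(2tP) - i s sin(2tP)`
gives the claim because `σ² = i σ¹ σ³`. -/

/-- The eigenvalue of `σ³` on the basis vector `j`. -/
def spin (j : Fin 2) : ℂ := (-1) ^ (j : ℕ)

lemma spin_eq_neg_of_ne {a b : Fin 2} (h : a ≠ b) : spin a = -spin b := by
  fin_cases a <;> fin_cases b <;> simp_all [spin]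

lemma cos_sub_I_mul_spin_mul_sin (j : Fin 2) (w : ℂ) :
    Complex.cos w - I * spin j * Complex.sin w = Complex.exp (-(w * spin j) * I) := by
  rw [Complex.exp_mul_I]
  fin_cases j <;> simp [spin] <;> ring

lemma pauli_zero_apply_self (a : Fin 2) : pauli 0 a a = 0 := by
  fin_cases a <;> simp [pauli]

lemma pauli_one_apply (a b : Fin 2) : pauli 1 a b = I * (pauli 0 a b * spin b) := by
  fin_cases a <;> fin_cases b <;> simp [pauli, spin]

lemma pauli_two_apply (a b : Fin 2) : pauli 2 a b = if a = b then spin a else 0 := by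
  fin_cases a <;> fin_cases b <;> simp [pauli, spin]

def spins {Λ : Type*} (f : Λ → Fin 2) : Λ → ℂ := fun x => spin (f x)

section QuadraticForm

variable {n R : Type*} [Fintype n] [DecidableEq n] [CommRing R]

theorem dotProduct_mulVec_add_single {A : Matrix n n R} (hA : A.IsSymm) (v : n → R) (i : n)
    (d : R) :
    (v + Pi.single i d) ⬝ᵥ A *ᵥ (v + Pi.single i d)
      = v ⬝ᵥ A *ᵥ v + 2 * d * (A *ᵥ v) i + d * d * A i i := by
  have hvA : v ⬝ᵥ A *ᵥ Pi.single i d = d * (A *ᵥ v) i := by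
    rw [dotProduct_mulVec, ← mulVec_transpose, hA.eq, dotProduct_single, mul_comm]
  simp only [mulVec_add, dotProduct_add, add_dotProduct, hvA, single_dotProduct]
  simp only [mulVec, dotProduct_single]
  ring

end QuadraticForm

section Diagonal

variable {n : Type*} [Fintype n] [DecidableEq n]

lemma exp_diagonal_eq (v : n → ℂ) :
    NormedSpace.exp (diagonal v) = diagonal fun i => Complex.exp (v i) := by
  rw [Matrix.exp_diagonal, Pi.exp_def]
  simp [← Complex.exp_eq_exp_ℂ]

theorem exp_smul_diagonal_mul_mul_exp_neg_smul (c : ℂ) (a : n → ℂ) (M : Matrix n n ℂ) :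
    NormedSpace.exp (c • diagonal a) * M * NormedSpace.exp ((-c) • diagonal a)
      = of fun i j => Complex.exp (c * (a i - a j)) * M i j := by
  ext i j
  simp only [← diagonal_smul, exp_diagonal_eq, diagonal_mul, mul_diagonal, of_apply,
    Pi.smul_apply, smul_eq_mul]
  rw [mul_comm _ (Complex.exp _), ← mul_assoc, ← Complex.exp_add]
  ring_nf

lemma mcos_diagonal (v : n → ℂ) :
    mcos (diagonal v) = diagonal fun i => Complex.cos (v i) := by
  ext i j
  by_cases h : i = j
  · subst h
    simp [mcos, ← diagonal_smul, exp_diagonal_eq, Complex.cos, mul_comm _ I]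
    ring
  · simp [mcos, ← diagonal_smul, exp_diagonal_eq, h]

lemma msin_diagonal (v : n → ℂ) :
    msin (diagonal v) = diagonal fun i => Complex.sin (v i) := by
  ext i j
  by_cases h : i = j
  · subst h
    simp [msin, ← diagonal_smul, exp_diagonal_eq, Complex.sin, mul_comm _ I]
    ring
  · simp [msin, ← diagonal_smul, exp_diagonal_eq, h]

end Diagonal

section Pauli

variable {Λ : Type*} [Fintype Λ] [DecidableEq Λ]

lemma pauliAt_two_eq_diagonal (x : Λ) : pauliAt x 2 = diagonal fun f => spins f x := by
  ext f g
  rw [pauliAt, pauli_two_apply, diagonal_apply]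
  by_cases hfg : f = g
  · simp [hfg, spins]
  · have hflip : ¬((∀ y, y ≠ x → f y = g y) ∧ f x = g x) := fun ⟨hoff, hx⟩ =>
      hfg <| funext fun y => if hy : y = x then hy ▸ hx else hoff y hy
    simp_all

lemma pauliAt_one_eq_smul_mul (x : Λ) : pauliAt x 1 = I • (pauliAt x 0 * pauliAt x 2) := by
  ext f g
  rw [Matrix.smul_apply, pauliAt_two_eq_diagonal, mul_diagonal, pauliAt, pauliAt]
  split_ifs <;> simp [pauli_one_apply, spins]

lemma spins_eq_add_single_of_pauliAt_zero_apply_ne_zero {x : Λ} {f g : Λ → Fin 2}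
    (h : pauliAt x 0 f g ≠ 0) : spins f = spins g + Pi.single x (-2 * spins g x) := by
  simp only [pauliAt, ne_eq, ite_eq_right_iff, Classical.not_imp] at h
  obtain ⟨hoff, h⟩ := h
  have hx : f x ≠ g x := fun hx => h (hx ▸ pauli_zero_apply_self (g x))
  funext y
  by_cases hy : y = x
  · subst hy
    simp only [spins, spin_eq_neg_of_ne hx, Pi.add_apply, Pi.single_eq_same]
    ring
  · simp [spins, hy, hoff y hy]

lemma sum_smul_pauliAt_two (A : Matrix Λ Λ ℂ) (x : Λ) :
    ∑ y, A x y • pauliAt y 2 = diagonal fun f => (A *ᵥ spins f) x := by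
  ext f g
  by_cases hfg : f = g
  · simp [hfg, pauliAt_two_eq_diagonal, Matrix.sum_apply, mulVec, dotProduct]
  · simp [hfg, pauliAt_two_eq_diagonal, Matrix.sum_apply]

lemma sum_sum_smul_pauliAt_two_mul (A : Matrix Λ Λ ℂ) :
    ∑ x, ∑ y, A x y • (pauliAt x 2 * pauliAt y 2) = diagonal fun f => spins f ⬝ᵥ A *ᵥ spins f := by
  ext f g
  by_cases hfg : f = g
  · simp only [hfg, pauliAt_two_eq_diagonal, Matrix.sum_apply, mulVec, dotProduct, Finset.mul_sum,
      diagonal_mul_diagonal, Matrix.smul_apply, diagonal_apply_eq, smul_eq_mul]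
    exact Finset.sum_congr rfl fun x _ => Finset.sum_congr rfl fun y _ => by ring
  · simp [hfg, pauliAt_two_eq_diagonal, Matrix.sum_apply]

lemma dotProduct_mulVec_spins_sub_of_pauliAt_zero_apply_ne_zero {A : Matrix Λ Λ ℂ}
    (hA : A.IsSymm) {x : Λ} (hx : A x x = 0) {f g : Λ → Fin 2} (h : pauliAt x 0 f g ≠ 0) :
    spins f ⬝ᵥ A *ᵥ spins f - spins g ⬝ᵥ A *ᵥ spins g = -4 * spins g x * (A *ᵥ spins g) x := by
  rw [spins_eq_add_single_of_pauliAt_zero_apply_ne_zero h, dotProduct_mulVec_add_single hA, hx]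
  ring

lemma gImHamiltonian_eq_diagonal (J : Λ → Λ → ℝ) :
    gImHamiltonian J
      = diagonal fun f => 2⁻¹ * (spins f ⬝ᵥ (of fun x y => (J x y : ℂ)) *ᵥ spins f) := by
  have hsum := sum_sum_smul_pauliAt_two_mul (of fun x y => (J x y : ℂ))
  simp only [of_apply] at hsum
  rw [gImHamiltonian, hsum, ← diagonal_smul]
  rfl

end Pauli

/-- **Exact solution of the gIm dynamics** (Radin; eq. (3.3.4)): with
`P = ∑_{y ∈ Λ} J x₀ y · σ_y³`, one has
`exp(itH) σ_{x₀}¹ exp(-itH) = σ_{x₀}¹ cos(2tP) - σ_{x₀}² sin(2tP)`. -/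
theorem gIm_exact_solution
    {Λ : Type*} [Fintype Λ] [DecidableEq Λ] (x₀ : Λ)
    (J : Λ → Λ → ℝ) (hJsymm : ∀ x y, J x y = J y x) (hJdiag : ∀ x, J x x = 0)
    (t : ℝ) :
    NormedSpace.exp ((I * t) • gImHamiltonian J) * pauliAt x₀ 0 *
        NormedSpace.exp ((-(I * t)) • gImHamiltonian J)
      = pauliAt x₀ 0 * mcos (((2 * t : ℝ) : ℂ) • ∑ y : Λ, (J x₀ y : ℂ) • pauliAt y 2)
        - pauliAt x₀ 1 * msin (((2 * t : ℝ) : ℂ) • ∑ y : Λ, (J x₀ y : ℂ) • pauliAt y 2) := by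
  set A : Matrix Λ Λ ℂ := of fun x y => (J x y : ℂ)
  set E : (Λ → Fin 2) → ℂ := fun f => 2⁻¹ * (spins f ⬝ᵥ A *ᵥ spins f)
  set P : (Λ → Fin 2) → ℂ := fun f => (A *ᵥ spins f) x₀
  have hA : A.IsSymm := Matrix.ext fun x y => by simp [A, hJsymm y x]
  have hH : gImHamiltonian J = diagonal E := gImHamiltonian_eq_diagonal J
  have hP : ∑ y, (J x₀ y : ℂ) • pauliAt y 2 = diagonal P := sum_smul_pauliAt_two A x₀
  rw [hH, hP, exp_smul_diagonal_mul_mul_exp_neg_smul,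
    pauliAt_one_eq_smul_mul, ← diagonal_smul, mcos_diagonal, msin_diagonal,
    pauliAt_two_eq_diagonal]
  ext f g
  simp only [Matrix.sub_apply, Matrix.smul_apply, mul_diagonal, of_apply, Pi.smul_apply,
    smul_eq_mul, spins]
  by_cases h : pauliAt x₀ 0 f g = 0
  · simp [h]
  · have hphase : I * t * (E f - E g) = -((2 * t : ℝ) * P g * spin (g x₀)) * I := by
      simp only [E, P, ← mul_sub,
        dotProduct_mulVec_spins_sub_of_pauliAt_zero_apply_ne_zero hA (by simp [A, hJdiag]) h, spins]
      push_cast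
      ring
    rw [hphase, ← cos_sub_I_mul_spin_mul_sin]
    ring

end
end

section
/- (Radin's lemma for the Dyson model D_α) Let α > 1. There exists a constant c > 0 such that for every real t with |t| ≥ 1, lim_{N→∞} ∏_{n=1}^N cos²(2t/n^α) ≤ exp(−c·|t|^{1/α}). (The limit exists because each factor lies in [0,1], so the partial products are nonincreasing and nonnegative.) -/
/-!
Write `T = |t|^{1/α}`. For the at least `T` integers `n ∈ [2T, 4T]` the angle `2t/nᵅ` has
modulus `2 (T/n)ᵅ ∈ [2·4^{-α}, 1]`, so each of these factors is at most
`cos²(2·4^{-α}) = 1 - c ≤ e^{-c}` with `c = sin²(2·4^{-α})`. All other factors lie in `[0,1]`,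
so every partial product beyond this block, and hence the limit, is at most `e^{-cT}`.
-/

open Filter Real Finset

theorem exists_tendsto_prod_Icc_of_mem_Icc {f : ℕ → ℝ} (hf0 : ∀ n, 0 ≤ f n)
    (hf1 : ∀ n, f n ≤ 1) :
    ∃ L, Tendsto (fun N => ∏ n ∈ Icc 1 N, f n) atTop (nhds L) ∧
      ∀ N, L ≤ ∏ n ∈ Icc 1 N, f n := by
  set P : ℕ → ℝ := fun N => ∏ n ∈ Icc 1 N, f n
  have hP : Antitone P := fun N M hNM =>
    prod_le_prod_of_subset_of_le_one (Icc_subset_Icc le_rfl hNM) (fun n _ => hf0 n)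
      fun n _ _ => hf1 n
  have hbdd : BddBelow (Set.range P) :=
    ⟨0, Set.forall_mem_range.2 fun _ => prod_nonneg fun n _ => hf0 n⟩
  exact ⟨⨅ N, P N, tendsto_atTop_ciInf hP hbdd, ciInf_le hbdd⟩

theorem prod_le_exp_neg_mul_card {ι : Type*} {s t : Finset ι} {f : ι → ℝ} {c : ℝ}
    (hts : t ⊆ s) (hf0 : ∀ i ∈ s, 0 ≤ f i) (hf1 : ∀ i ∈ s, f i ≤ 1)
    (hft : ∀ i ∈ t, f i ≤ exp (-c)) :
    ∏ i ∈ s, f i ≤ exp (-c * #t) :=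
  calc ∏ i ∈ s, f i ≤ ∏ i ∈ t, f i :=
        prod_le_prod_of_subset_of_le_one hts hf0 fun i hi _ => hf1 i hi
    _ ≤ ∏ _i ∈ t, exp (-c) := prod_le_prod (fun i hi => hf0 i (hts hi)) hft
    _ = exp (-c * #t) := by rw [prod_const, ← exp_nat_mul, mul_comm]

theorem cos_sq_le_exp_neg_sin_sq (a : ℝ) : cos a ^ 2 ≤ exp (-sin a ^ 2) := by
  rw [cos_sq']
  linarith [add_one_le_exp (-sin a ^ 2)]

theorem cos_sq_le_cos_sq_of_le_abs {a x : ℝ} (ha : 0 ≤ a) (hax : a ≤ |x|)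
    (hx : |x| ≤ π / 2) : cos x ^ 2 ≤ cos a ^ 2 := by
  rw [← cos_abs]
  have hcos : 0 ≤ cos |x| :=
    cos_nonneg_of_neg_pi_div_two_le_of_le (by linarith [abs_nonneg x, pi_pos]) hx
  exact pow_le_pow_left₀ hcos (cos_le_cos_of_nonneg_of_le_pi ha (by linarith [pi_pos]) hax) 2

theorem rpow_div_rpow_mem_Icc {α T x : ℝ} (hα : 0 ≤ α) (hT : 0 < T) (h2 : 2 * T ≤ x)
    (h4 : x ≤ 4 * T) :
    (1 / 4) ^ α ≤ T ^ α / x ^ α ∧ T ^ α / x ^ α ≤ (1 / 2) ^ α := by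
  have hx : 0 < x := by linarith
  rw [← div_rpow hT.le hx.le]
  constructor
  · exact rpow_le_rpow (by norm_num) (by rw [le_div_iff₀ hx]; linarith) hα
  · exact rpow_le_rpow (by positivity) (by rw [div_le_iff₀ hx]; linarith) hα

theorem cos_sq_two_mul_div_rpow_le {α t T x : ℝ} (hα : 1 ≤ α) (hT : 0 < T) (ht : |t| = T ^ α)
    (h2 : 2 * T ≤ x) (h4 : x ≤ 4 * T) :
    cos (2 * t / x ^ α) ^ 2 ≤ exp (-sin (2 * (1 / 4) ^ α) ^ 2) := by
  have hxα : 0 < x ^ α := rpow_pos_of_pos (by linarith) α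
  have habs : |2 * t / x ^ α| = 2 * (T ^ α / x ^ α) := by
    rw [abs_div, abs_mul, abs_two, abs_of_pos hxα, ht, mul_div_assoc]
  obtain ⟨hlo, hhi⟩ := rpow_div_rpow_mem_Icc (zero_le_one.trans hα) hT h2 h4
  have hhalf : (1 / 2 : ℝ) ^ α ≤ 1 / 2 := by
    simpa using rpow_le_rpow_of_exponent_ge (by norm_num : (0 : ℝ) < 1 / 2) (by norm_num) hα
  calc cos (2 * t / x ^ α) ^ 2 ≤ cos (2 * (1 / 4) ^ α) ^ 2 :=
        cos_sq_le_cos_sq_of_le_abs (by positivity) (by rw [habs]; linarith)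
          (by rw [habs]; linarith [pi_gt_three])
    _ ≤ _ := cos_sq_le_exp_neg_sin_sq _

theorem exists_nat_block_mem_Icc_two_mul_four_mul {T : ℝ} (hT : 1 ≤ T) :
    ∃ a k : ℕ, 1 ≤ a ∧ T ≤ k + 1 ∧ ∀ n ∈ Icc a (a + k), 2 * T ≤ n ∧ (n : ℝ) ≤ 4 * T := by
  have ha_lb : 2 * T ≤ ⌈2 * T⌉₊ := Nat.le_ceil _
  have ha_ub : (⌈2 * T⌉₊ : ℝ) < 2 * T + 1 := Nat.ceil_lt_add_one (by linarith)
  have hk_ub : (⌊T⌋₊ : ℝ) ≤ T := Nat.floor_le (by linarith)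
  refine ⟨⌈2 * T⌉₊, ⌊T⌋₊, (Nat.one_le_cast (α := ℝ)).1 (by linarith), (Nat.lt_floor_add_one T).le,
    fun n hn => ?_⟩
  obtain ⟨hlo, hhi⟩ := mem_Icc.1 hn
  have hlo' : (⌈2 * T⌉₊ : ℝ) ≤ n := by exact_mod_cast hlo
  have hhi' : (n : ℝ) ≤ ⌈2 * T⌉₊ + ⌊T⌋₊ := by exact_mod_cast hhi
  constructor <;> linarith

theorem sin_two_mul_quarter_rpow_pos {α : ℝ} (hα : 0 ≤ α) : 0 < sin (2 * (1 / 4) ^ α) := by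
  have hquarter : (1 / 4 : ℝ) ^ α ≤ 1 := rpow_le_one (by norm_num) (by norm_num) hα
  exact sin_pos_of_pos_of_lt_pi (by positivity) (by linarith [pi_gt_three])

/-- **Radin's lemma for the Dyson model `D_α`.** For `α > 1` there is a constant `c > 0`
such that for all `|t| ≥ 1` the (existing, since each factor lies in `[0,1]`) limit of the
partial products `∏_{n=1}^N cos²(2t/nᵅ)` is at most `exp(-c |t|^{1/α})`. -/
theorem radin_dyson_decay (α : ℝ) (hα : 1 < α) :
    ∃ c : ℝ, 0 < c ∧ ∀ t : ℝ, 1 ≤ |t| →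
      ∃ L : ℝ,
        Tendsto (fun N : ℕ => ∏ n ∈ Finset.Icc 1 N, (Real.cos (2 * t / (n : ℝ) ^ α)) ^ 2)
          atTop (nhds L) ∧
        L ≤ Real.exp (-c * |t| ^ (1 / α)) := by
  set c := sin (2 * (1 / 4 : ℝ) ^ α) ^ 2
  have hc : 0 < c := pow_pos (sin_two_mul_quarter_rpow_pos (by linarith)) 2
  refine ⟨c, hc, fun t ht => ?_⟩
  obtain ⟨L, hL, hL_le⟩ := exists_tendsto_prod_Icc_of_mem_Icc
    (f := fun n : ℕ => cos (2 * t / (n : ℝ) ^ α) ^ 2) (fun _ => sq_nonneg _)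
    fun _ => cos_sq_le_one _
  refine ⟨L, hL, ?_⟩
  set T := |t| ^ (1 / α)
  have hT : 1 ≤ T := one_le_rpow ht (by positivity)
  have hTα : |t| = T ^ α := by
    rw [← rpow_mul (abs_nonneg t), one_div, inv_mul_cancel₀ (by positivity), rpow_one]
  obtain ⟨a, k, ha, hk, hblock⟩ := exists_nat_block_mem_Icc_two_mul_four_mul hT
  calc L ≤ ∏ n ∈ Icc 1 (a + k), cos (2 * t / (n : ℝ) ^ α) ^ 2 := hL_le _
    _ ≤ exp (-c * #(Icc a (a + k))) :=
        prod_le_exp_neg_mul_card (Icc_subset_Icc ha le_rfl) (fun _ _ => sq_nonneg _)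
          (fun _ _ => cos_sq_le_one _) fun n hn =>
            cos_sq_two_mul_div_rpow_le hα.le (by positivity) hTα (hblock n hn).1 (hblock n hn).2
    _ ≤ exp (-c * T) := by
        rw [Nat.card_Icc, show a + k + 1 - a = k + 1 by omega, Nat.cast_add_one]
        exact exp_le_exp.2 (by nlinarith)
end

section
/- (Subadditivity of the von Neumann entropy, eq. (3.6.8)) Let I₁ and I₂ be nonempty finite types and let ρ be a density matrix indexed by I₁ × I₂. Let ρ₁ and ρ₂ be the reduced density matrices: ρ₁(i,j) = ∑_{k∈I₂} ρ((i,k),(j,k)) and ρ₂(i,j) = ∑_{k∈I₁} ρ((k,i),(k,j)). Then S(ρ) ≤ S(ρ₁) + S(ρ₂). -/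
/-!
Diagonalize the reduced states, `ρ₁ = U₁ D₁ U₁ᴴ` and `ρ₂ = U₂ D₂ U₂ᴴ`, and let `d` be the diagonal
of `ρ` in the product basis `U₁ ⊗ U₂`. Then `d` is a probability distribution on `I₁ × I₂` whose
marginals are the spectra of `ρ₁` and `ρ₂`, so classical subadditivity of the Shannon entropy gives
`H(d) ≤ S(ρ₁) + S(ρ₂)`. On the other hand the diagonal of `ρ` in any orthonormal basis is the image
of its spectrum under the doubly stochastic matrix `|⟨eₓ, vₖ⟩|²` (`vₖ` an eigenbasis of `ρ`),
so concavity of `-x log x` gives `S(ρ) ≤ H(d)`.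
-/

open Matrix Complex Finset
open scoped ComplexOrder

noncomputable section

/-- The von Neumann entropy `S(ρ) = -∑_k λ_k log λ_k` of a (Hermitian) matrix, where the
`λ_k` are its eigenvalues with multiplicity (and `0 · log 0 = 0`, Boltzmann constant `1`). -/
def vnEntropy {n : Type*} [Fintype n] [DecidableEq n] (ρ : Matrix n n ℂ) : ℝ :=
  if h : ρ.IsHermitian then -∑ i, h.eigenvalues i * Real.log (h.eigenvalues i) else 0

end

open scoped Kronecker
open Real

namespace Real

lemma mul_log_sub_mul_log_le {p q : ℝ} (hp : 0 ≤ p) (hq : 0 ≤ q) (hpq : q = 0 → p = 0) :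
    p * log q - p * log p ≤ q - p := by
  rcases hp.eq_or_lt with rfl | hp
  · simpa using hq
  have hq : 0 < q := hq.lt_of_ne fun h => hp.ne' (hpq h.symm)
  have := mul_le_mul_of_nonneg_left (log_le_sub_one_of_pos (div_pos hq hp)) hp.le
  rw [log_div hq.ne' hp.ne', mul_sub, mul_sub, mul_div_cancel₀ _ hp.ne'] at this
  linarith

lemma sum_mul_log_le_sum_mul_log {ι : Type*} {s : Finset ι} {p q : ι → ℝ}
    (hp : ∀ i ∈ s, 0 ≤ p i) (hq : ∀ i ∈ s, 0 ≤ q i) (hpq : ∀ i ∈ s, q i = 0 → p i = 0)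
    (hsum : ∑ i ∈ s, q i ≤ ∑ i ∈ s, p i) :
    ∑ i ∈ s, p i * log (q i) ≤ ∑ i ∈ s, p i * log (p i) := by
  have := sum_le_sum fun i hi => mul_log_sub_mul_log_le (hp i hi) (hq i hi) (hpq i hi)
  rw [sum_sub_distrib, sum_sub_distrib] at this
  linarith

lemma sum_negMulLog_le_sum_negMulLog_fst_add_snd {m n : Type*} [Fintype m] [Fintype n]
    {d : m × n → ℝ} (hd : ∀ x, 0 ≤ d x) (hsum : ∑ x, d x = 1) :
    ∑ x, negMulLog (d x)
      ≤ ∑ i, negMulLog (∑ j, d (i, j)) + ∑ j, negMulLog (∑ i, d (i, j)) := by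
  set a : m → ℝ := fun i => ∑ j, d (i, j)
  set b : n → ℝ := fun j => ∑ i, d (i, j)
  have hda (x : m × n) : d x ≤ a x.1 :=
    single_le_sum (f := fun j => d (x.1, j)) (fun j _ => hd _) (mem_univ x.2)
  have hdb (x : m × n) : d x ≤ b x.2 :=
    single_le_sum (f := fun i => d (i, x.2)) (fun i _ => hd _) (mem_univ x.1)
  have gibbs : ∑ x, d x * log (a x.1 * b x.2) ≤ ∑ x, d x * log (d x) := by
    refine sum_mul_log_le_sum_mul_log (fun x _ => hd x)
      (fun x _ => mul_nonneg ((hd x).trans (hda x)) ((hd x).trans (hdb x))) (fun x _ hx => ?_) ?_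
    · rcases mul_eq_zero.mp hx with h | h
      · exact le_antisymm (h ▸ hda x) (hd x)
      · exact le_antisymm (h ▸ hdb x) (hd x)
    · have ha : ∑ i, a i = 1 := by rw [← hsum, Fintype.sum_prod_type]
      have hb : ∑ j, b j = 1 := by rw [← hsum, Fintype.sum_prod_type_right]
      rw [Fintype.sum_prod_type, ← sum_mul_sum, ha, hb, hsum, mul_one]
  have log_mul_marginals (x : m × n) :
      d x * log (a x.1 * b x.2) = d x * log (a x.1) + d x * log (b x.2) := by
    rcases (hd x).eq_or_lt with h | h
    · simp [← h]
    · rw [log_mul (h.trans_le (hda x)).ne' (h.trans_le (hdb x)).ne', mul_add]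
  have sum_fst : ∑ x : m × n, d x * log (a x.1) = ∑ i, a i * log (a i) := by
    simp [Fintype.sum_prod_type, ← sum_mul, a]
  have sum_snd : ∑ x : m × n, d x * log (b x.2) = ∑ j, b j * log (b j) := by
    simp [Fintype.sum_prod_type_right, ← sum_mul, b]
  rw [sum_congr rfl fun x _ => log_mul_marginals x, sum_add_distrib, sum_fst, sum_snd] at gibbs
  simp only [negMulLog_eq_neg, sum_neg_distrib]
  linarith

lemma sum_negMulLog_le_sum_negMulLog_mulVec {n : Type*} [Fintype n] [DecidableEq n]
    {M : Matrix n n ℝ} (hM : M ∈ doublyStochastic ℝ n) {p : n → ℝ} (hp : ∀ i, 0 ≤ p i) :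
    ∑ i, negMulLog (p i) ≤ ∑ i, negMulLog ((M *ᵥ p) i) := by
  have jensen (i : n) : ∑ j, M i j * negMulLog (p j) ≤ negMulLog ((M *ᵥ p) i) := by
    simpa [mulVec, dotProduct] using concaveOn_negMulLog.le_map_sum (t := univ) (w := M i) (p := p)
      (fun j _ => nonneg_of_mem_doublyStochastic hM) (sum_row_of_mem_doublyStochastic hM i)
      (fun j _ => hp j)
  calc ∑ j, negMulLog (p j) = ∑ i, ∑ j, M i j * negMulLog (p j) := by
        simp [sum_comm (γ := n), ← sum_mul, sum_col_of_mem_doublyStochastic hM]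
    _ ≤ _ := sum_le_sum fun i _ => jensen i

end Real

namespace Matrix

section PartialTrace

variable {R m n : Type*}

def partialTraceRight [AddCommMonoid R] [Fintype n] (ρ : Matrix (m × n) (m × n) R) :
    Matrix m m R :=
  of fun i j => ∑ k, ρ (i, k) (j, k)

def partialTraceLeft [AddCommMonoid R] [Fintype m] (ρ : Matrix (m × n) (m × n) R) :
    Matrix n n R :=
  of fun i j => ∑ k, ρ (k, i) (k, j)

lemma IsHermitian.partialTraceRight [AddCommMonoid R] [StarAddMonoid R] [Fintype n]
    {ρ : Matrix (m × n) (m × n) R} (hρ : ρ.IsHermitian) : ρ.partialTraceRight.IsHermitian := by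
  ext i j
  simp [Matrix.partialTraceRight, star_sum, hρ.apply]

lemma IsHermitian.partialTraceLeft [AddCommMonoid R] [StarAddMonoid R] [Fintype m]
    {ρ : Matrix (m × n) (m × n) R} (hρ : ρ.IsHermitian) : ρ.partialTraceLeft.IsHermitian := by
  ext i j
  simp [Matrix.partialTraceLeft, star_sum, hρ.apply]

variable [CommSemiring R] [Fintype m] [Fintype n]

lemma partialTraceRight_kronecker_mul_mul_kronecker [DecidableEq n] (A C : Matrix m m R)
    {B D : Matrix n n R} (hDB : D * B = 1) (ρ : Matrix (m × n) (m × n) R) :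
    partialTraceRight ((A ⊗ₖ B) * ρ * (C ⊗ₖ D)) = A * partialTraceRight ρ * C := by
  ext i j
  have hDB' (e b : n) : ∑ k, D e k * B k b = if e = b then 1 else 0 := by
    simpa [mul_apply, one_apply] using congrFun (congrFun hDB e) b
  calc ∑ k, ((A ⊗ₖ B) * ρ * (C ⊗ₖ D)) (i, k) (j, k)
      = ∑ y : m × n, ∑ x : m × n, A i x.1 * ρ x y * C y.1 j * ∑ k, D y.2 k * B k x.2 := by
        simp only [mul_apply, kroneckerMap_apply, sum_mul, mul_sum]
        rw [sum_comm]
        refine sum_congr rfl fun y _ => ?_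
        rw [sum_comm]
        exact sum_congr rfl fun x _ => sum_congr rfl fun k _ => by ring
    _ = (A * partialTraceRight ρ * C) i j := by
        simp only [hDB', mul_ite, mul_one, mul_zero, mul_apply, partialTraceRight, of_apply,
          mul_sum, sum_mul, Fintype.sum_prod_type]
        refine sum_congr rfl fun c _ => ?_
        rw [sum_comm]
        simp

lemma partialTraceLeft_kronecker_mul_mul_kronecker [DecidableEq m] {A C : Matrix m m R}
    (hCA : C * A = 1) (B D : Matrix n n R) (ρ : Matrix (m × n) (m × n) R) :
    partialTraceLeft ((A ⊗ₖ B) * ρ * (C ⊗ₖ D)) = B * partialTraceLeft ρ * D := by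
  ext i j
  have hCA' (c a : m) : ∑ k, C c k * A k a = if c = a then 1 else 0 := by
    simpa [mul_apply, one_apply] using congrFun (congrFun hCA c) a
  calc ∑ k, ((A ⊗ₖ B) * ρ * (C ⊗ₖ D)) (k, i) (k, j)
      = ∑ y : m × n, ∑ x : m × n, B i x.2 * ρ x y * D y.2 j * ∑ k, C y.1 k * A k x.1 := by
        simp only [mul_apply, kroneckerMap_apply, sum_mul, mul_sum]
        rw [sum_comm]
        refine sum_congr rfl fun y _ => ?_
        rw [sum_comm]
        exact sum_congr rfl fun x _ => sum_congr rfl fun k _ => by ring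
    _ = (B * partialTraceLeft ρ * D) i j := by
        simp only [hCA', mul_ite, mul_one, mul_zero, mul_apply, partialTraceLeft, of_apply,
          mul_sum, sum_mul, Fintype.sum_prod_type_right]
        refine sum_congr rfl fun e _ => ?_
        rw [sum_comm]
        simp

end PartialTrace

variable {𝕜 m n : Type*} [RCLike 𝕜] [Fintype m] [Fintype n] [DecidableEq m] [DecidableEq n]

lemma trace_conjTranspose_mul_mul_of_mem_unitaryGroup {V : Matrix n n 𝕜}
    (hV : V ∈ unitaryGroup n 𝕜) (A : Matrix n n 𝕜) : (Vᴴ * A * V).trace = A.trace := by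
  rw [trace_mul_cycle, ← star_eq_conjTranspose, mem_unitaryGroup_iff.mp hV, Matrix.one_mul]

lemma IsHermitian.conjTranspose_eigenvectorUnitary_mul_mul {A : Matrix n n 𝕜}
    (hA : A.IsHermitian) :
    (hA.eigenvectorUnitary : Matrix n n 𝕜)ᴴ * A * (hA.eigenvectorUnitary : Matrix n n 𝕜)
      = diagonal (RCLike.ofReal ∘ hA.eigenvalues) := by
  simpa [Unitary.conjStarAlgAut_star_apply, star_eq_conjTranspose] using
    hA.conjStarAlgAut_star_eigenvectorUnitary

lemma mul_diagonal_mul_conjTranspose_apply_self (M : Matrix n n 𝕜) (p : n → ℝ) (i : n) :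
    (M * diagonal (RCLike.ofReal ∘ p : n → 𝕜) * Mᴴ) i i = ∑ k, ((‖M i k‖ ^ 2 * p k : ℝ) : 𝕜) := by
  rw [mul_apply]
  push_cast
  refine sum_congr rfl fun k _ => ?_
  rw [mul_diagonal, conjTranspose_apply, RCLike.star_def, ← RCLike.mul_conj, Function.comp_apply]
  ring

lemma norm_sq_mem_doublyStochastic {U : Matrix n n 𝕜} (hU : U ∈ unitaryGroup n 𝕜) :
    (of fun i j => ‖U i j‖ ^ 2) ∈ doublyStochastic ℝ n := by
  have row (i : n) : ∑ j, ‖U i j‖ ^ 2 = 1 := by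
    have := congrFun (congrFun (mem_unitaryGroup_iff.mp hU) i) i
    simp only [mul_apply, star_apply, RCLike.star_def, RCLike.mul_conj, one_apply_eq] at this
    exact_mod_cast this
  have col (j : n) : ∑ i, ‖U i j‖ ^ 2 = 1 := by
    have := congrFun (congrFun (mem_unitaryGroup_iff'.mp hU) j) j
    simp only [mul_apply, star_apply, RCLike.star_def, RCLike.conj_mul, one_apply_eq] at this
    exact_mod_cast this
  exact mem_doublyStochastic_iff_sum.mpr ⟨fun i j => sq_nonneg ‖U i j‖, row, col⟩

lemma PosSemidef.sum_negMulLog_eigenvalues_le_sum_negMulLog_diag {A : Matrix n n 𝕜}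
    (hA : A.PosSemidef) {V : Matrix n n 𝕜} (hV : V ∈ unitaryGroup n 𝕜) :
    ∑ k, negMulLog (hA.1.eigenvalues k) ≤ ∑ i, negMulLog (RCLike.re ((Vᴴ * A * V) i i)) := by
  set M := Vᴴ * (hA.1.eigenvectorUnitary : Matrix n n 𝕜)
  have hM : M ∈ unitaryGroup n 𝕜 :=
    Submonoid.mul_mem _ (Unitary.star_mem hV) hA.1.eigenvectorUnitary.2
  have conj : Vᴴ * A * V = M * diagonal (RCLike.ofReal ∘ hA.1.eigenvalues) * Mᴴ := by
    conv_lhs => rw [hA.1.spectral_theorem, Unitary.conjStarAlgAut_apply]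
    simp [M, Matrix.mul_assoc, conjTranspose_mul, star_eq_conjTranspose]
  have diag (i : n) : RCLike.re ((Vᴴ * A * V) i i)
      = ((of fun i j => ‖M i j‖ ^ 2) *ᵥ hA.1.eigenvalues) i := by
    rw [conj, mul_diagonal_mul_conjTranspose_apply_self, ← RCLike.ofReal_sum, RCLike.ofReal_re]
    rfl
  simp only [diag]
  exact sum_negMulLog_le_sum_negMulLog_mulVec (norm_sq_mem_doublyStochastic hM)
    hA.eigenvalues_nonneg

lemma partialTraceRight_conj_eigenvectorUnitary_kronecker {ρ : Matrix (m × n) (m × n) 𝕜}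
    (h : ρ.partialTraceRight.IsHermitian) {U : Matrix n n 𝕜} (hU : U ∈ unitaryGroup n 𝕜) :
    partialTraceRight (((h.eigenvectorUnitary : Matrix m m 𝕜) ⊗ₖ U)ᴴ * ρ
        * ((h.eigenvectorUnitary : Matrix m m 𝕜) ⊗ₖ U))
      = diagonal (RCLike.ofReal ∘ h.eigenvalues) := by
  rw [conjTranspose_kronecker, partialTraceRight_kronecker_mul_mul_kronecker _ _
    (show U * Uᴴ = 1 from mem_unitaryGroup_iff.mp hU), h.conjTranspose_eigenvectorUnitary_mul_mul]

lemma partialTraceLeft_conj_kronecker_eigenvectorUnitary {ρ : Matrix (m × n) (m × n) 𝕜}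
    (h : ρ.partialTraceLeft.IsHermitian) {U : Matrix m m 𝕜} (hU : U ∈ unitaryGroup m 𝕜) :
    partialTraceLeft ((U ⊗ₖ (h.eigenvectorUnitary : Matrix n n 𝕜))ᴴ * ρ
        * (U ⊗ₖ (h.eigenvectorUnitary : Matrix n n 𝕜)))
      = diagonal (RCLike.ofReal ∘ h.eigenvalues) := by
  rw [conjTranspose_kronecker, partialTraceLeft_kronecker_mul_mul_kronecker
    (show U * Uᴴ = 1 from mem_unitaryGroup_iff.mp hU), h.conjTranspose_eigenvectorUnitary_mul_mul]

end Matrix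

lemma vnEntropy_eq_sum_negMulLog {n : Type*} [Fintype n] [DecidableEq n] {ρ : Matrix n n ℂ}
    (hρ : ρ.IsHermitian) : vnEntropy ρ = ∑ i, negMulLog (hρ.eigenvalues i) := by
  simp [vnEntropy, hρ, negMulLog_eq_neg]

theorem vnEntropy_subadditivity_general
    {I₁ I₂ : Type*} [Fintype I₁] [Fintype I₂] [DecidableEq I₁] [DecidableEq I₂]
    (ρ : Matrix (I₁ × I₂) (I₁ × I₂) ℂ)
    (hρ : ρ.PosSemidef) (hρtr : ρ.trace = 1) :
    vnEntropy ρ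
      ≤ vnEntropy (Matrix.of fun i j : I₁ => ∑ k : I₂, ρ (i, k) (j, k))
        + vnEntropy (Matrix.of fun i j : I₂ => ∑ k : I₁, ρ (k, i) (k, j)) := by
  change vnEntropy ρ ≤ vnEntropy ρ.partialTraceRight + vnEntropy ρ.partialTraceLeft
  have h₁ := hρ.1.partialTraceRight
  have h₂ := hρ.1.partialTraceLeft
  have hW := kronecker_mem_unitary h₁.eigenvectorUnitary.2 h₂.eigenvectorUnitary.2
  set W := (h₁.eigenvectorUnitary : Matrix I₁ I₁ ℂ) ⊗ₖ (h₂.eigenvectorUnitary : Matrix I₂ I₂ ℂ)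
  set d : I₁ × I₂ → ℝ := fun x => ((Wᴴ * ρ * W) x x).re
  have hd (x : I₁ × I₂) : 0 ≤ d x :=
    (nonneg_iff.mp (hρ.conjTranspose_mul_mul_same W).diag_nonneg).1
  have hd_sum : ∑ x, d x = 1 := by
    rw [← one_re, ← hρtr, ← trace_conjTranspose_mul_mul_of_mem_unitaryGroup hW, trace, re_sum]
    rfl
  have hd₁ (i : I₁) : ∑ j, d (i, j) = h₁.eigenvalues i := by
    simpa [d, W, partialTraceRight] using congrArg (fun M => (M i i).re)
      (partialTraceRight_conj_eigenvectorUnitary_kronecker h₁ h₂.eigenvectorUnitary.2)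
  have hd₂ (j : I₂) : ∑ i, d (i, j) = h₂.eigenvalues j := by
    simpa [d, W, partialTraceLeft] using congrArg (fun M => (M j j).re)
      (partialTraceLeft_conj_kronecker_eigenvectorUnitary h₂ h₁.eigenvectorUnitary.2)
  rw [vnEntropy_eq_sum_negMulLog hρ.1, vnEntropy_eq_sum_negMulLog h₁,
    vnEntropy_eq_sum_negMulLog h₂]
  calc _ ≤ ∑ x, negMulLog (d x) := hρ.sum_negMulLog_eigenvalues_le_sum_negMulLog_diag hW
    _ ≤ _ := sum_negMulLog_le_sum_negMulLog_fst_add_snd hd hd_sum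
    _ = _ := by simp only [hd₁, hd₂]

/-- **Subadditivity of the von Neumann entropy** (eq. (3.6.8)): for a density matrix `ρ` on
a product `I₁ × I₂` with reduced density matrices `ρ₁, ρ₂` obtained by partial traces,
`S(ρ) ≤ S(ρ₁) + S(ρ₂)`. -/
theorem vnEntropy_subadditivity
    {I₁ I₂ : Type*} [Fintype I₁] [Fintype I₂] [DecidableEq I₁] [DecidableEq I₂]
    [Nonempty I₁] [Nonempty I₂]
    (ρ : Matrix (I₁ × I₂) (I₁ × I₂) ℂ)
    (hρ : ρ.PosSemidef) (hρtr : ρ.trace = 1) :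
    vnEntropy ρ
      ≤ vnEntropy (Matrix.of fun i j : I₁ => ∑ k : I₂, ρ (i, k) (j, k))
        + vnEntropy (Matrix.of fun i j : I₂ => ∑ k : I₁, ρ (k, i) (k, j)) :=
  vnEntropy_subadditivity_general ρ hρ hρtr
end

section
/- (Multidimensional Fekete lemma underlying the existence of the mean entropy, eqs. (3.6.11)–(3.6.12)) Let ν ≥ 1, C ≥ 0, and let f : (Fin ν → ℕ) → ℝ satisfy: (i) 0 ≤ f(a) ≤ C·∏_{i} a_i for all a; (ii) f is subadditive in each coordinate, i.e. for every index i, every a : Fin ν → ℕ, and all m, n ∈ ℕ, f(update a i (m+n)) ≤ f(update a i m) + f(update a i n). Then, along the filter atTop on Fin ν → ℕ (i.e. as all coordinates a_i tend to infinity), f(a)/∏_i a_i converges to the infimum of f(b)/∏_i b_i taken over all b : Fin ν → ℕ with b_i > 0 for every i. -/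
/-!
For `a`, `b` with positive coordinates, replace the coordinates of `a` by those of `b` one at a
time. Writing `a i = q * b i + r` with `r < b i`, subadditivity in coordinate `i` bounds `f` by
`q` copies of the block with side `b i` plus one remainder block, whose value is at most
`C * r * (volume of the other sides)`. Per unit volume this costs at most `C * b i / a i`, so
`f a / ∏ a ≤ f b / ∏ b + C * ∑ i, b i / a i`; letting `a → ∞` gives the limit `≤ f b / ∏ b`
for every `b`, while the infimum is trivially a lower bound.
-/

open Filter Finset Function Topology

section Fekete

variable {ι : Type*} [Fintype ι] {f : (ι → ℕ) → ℝ} {C : ℝ}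

noncomputable def volDensity (f : (ι → ℕ) → ℝ) (a : ι → ℕ) : ℝ := f a / ∏ i, (a i : ℝ)

theorem volDensity_nonneg (hf0 : ∀ a, 0 ≤ f a) (a : ι → ℕ) : 0 ≤ volDensity f a :=
  div_nonneg (hf0 a) (by positivity)

theorem tendsto_sum_div_atTop_nhds_zero (c : ι → ℝ) :
    Tendsto (fun a : ι → ℕ => ∑ i, c i / a i) atTop (𝓝 0) := by
  rw [← sum_const_zero (s := (univ : Finset ι))]
  refine tendsto_finsetSum _ fun i _ => tendsto_const_nhds.div_atTop ?_
  exact tendsto_natCast_atTop_atTop.comp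
    (tendsto_atTop_atTop.2 fun n => ⟨fun _ => n, fun a ha => ha i⟩)

variable [DecidableEq ι]

theorem volDensity_le_volDensity_update_add (hC : 0 ≤ C) (hf0 : ∀ a, 0 ≤ f a)
    (hfC : ∀ a, f a ≤ C * ∏ i, (a i : ℝ)) {x : ι → ℕ} {i : ι}
    (hsub : Subadditive fun n => f (update x i n)) (hx : ∀ j, 0 < x j) {m : ℕ} (hm : 0 < m) :
    volDensity f x ≤ volDensity f (update x i m) + C * m / x i := by
  set P := ∏ j ∈ univ.erase i, (x j : ℝ)
  have hP : 0 < P := prod_pos fun j _ => by exact_mod_cast hx j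
  have hxi : (0 : ℝ) < x i := by exact_mod_cast hx i
  have hm' : (0 : ℝ) < m := by exact_mod_cast hm
  have hvol : ∀ k : ℕ, ∏ j, ((update x i k j : ℕ) : ℝ) = k * P := fun k => by
    rw [← mul_prod_erase univ _ (mem_univ i)]
    simp only [update_self]
    congr 1
    exact prod_congr rfl fun j hj => by rw [update_of_ne (ne_of_mem_erase hj)]
  have hvol_x : ∏ j, (x j : ℝ) = x i * P := by simpa using hvol (x i)
  have hsplit : f x ≤ (x i / m : ℕ) * f (update x i m) + f (update x i (x i % m)) := by
    simpa [Nat.div_add_mod'] using hsub.apply_mul_add_le (x i / m) m (x i % m)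
  have hrem : f (update x i (x i % m)) ≤ C * m * P := by
    refine (hfC _).trans ?_
    rw [hvol, ← mul_assoc]
    gcongr
    exact_mod_cast (Nat.mod_lt _ hm).le
  have hquot : ((x i / m : ℕ) : ℝ) ≤ x i / m := by
    rw [le_div_iff₀ hm']
    exact_mod_cast Nat.div_mul_le_self _ _
  unfold volDensity
  rw [hvol, hvol_x, div_le_iff₀ (by positivity)]
  calc f x ≤ x i / m * f (update x i m) + C * m * P := by
        linarith [mul_le_mul_of_nonneg_right hquot (hf0 (update x i m))]
    _ = (f (update x i m) / (m * P) + C * m / x i) * (x i * P) := by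
        field_simp

theorem volDensity_le_volDensity_piecewise_add (hC : 0 ≤ C) (hf0 : ∀ a, 0 ≤ f a)
    (hfC : ∀ a, f a ≤ C * ∏ i, (a i : ℝ))
    (hsub : ∀ i a, Subadditive fun n => f (update a i n)) {a b : ι → ℕ} (ha : ∀ i, 0 < a i)
    (hb : ∀ i, 0 < b i) (s : Finset ι) :
    volDensity f a ≤ volDensity f (s.piecewise b a) + C * ∑ i ∈ s, (b i : ℝ) / a i := by
  induction s using Finset.induction_on with
  | empty => simp
  | @insert i s hi ih =>
    have hx : ∀ j, 0 < s.piecewise b a j := fun j => by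
      by_cases hj : j ∈ s
      · simpa [hj] using hb j
      · simpa [hj] using ha j
    have hxi : s.piecewise b a i = a i := piecewise_eq_of_notMem _ _ _ hi
    have step := volDensity_le_volDensity_update_add hC hf0 hfC (hsub i _) hx (hb i)
    rw [hxi, ← piecewise_insert] at step
    rw [mul_div_assoc] at step
    rw [sum_insert hi, mul_add]
    linarith

theorem volDensity_le_volDensity_add (hC : 0 ≤ C) (hf0 : ∀ a, 0 ≤ f a)
    (hfC : ∀ a, f a ≤ C * ∏ i, (a i : ℝ))
    (hsub : ∀ i a, Subadditive fun n => f (update a i n)) {a b : ι → ℕ} (ha : ∀ i, 0 < a i)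
    (hb : ∀ i, 0 < b i) :
    volDensity f a ≤ volDensity f b + C * ∑ i, (b i : ℝ) / a i := by
  simpa using volDensity_le_volDensity_piecewise_add hC hf0 hfC hsub ha hb univ

end Fekete

theorem multidim_fekete_general (ν : ℕ) (C : ℝ) (hC : 0 ≤ C)
    (f : (Fin ν → ℕ) → ℝ)
    (hf0 : ∀ a, 0 ≤ f a)
    (hfC : ∀ a, f a ≤ C * ∏ i, (a i : ℝ))
    (hsub : ∀ (i : Fin ν) (a : Fin ν → ℕ) (m n : ℕ),
      f (Function.update a i (m + n)) ≤ f (Function.update a i m) + f (Function.update a i n)) :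
    Tendsto (fun a : Fin ν → ℕ => f a / ∏ i, (a i : ℝ)) atTop
      (nhds (⨅ b : {b : Fin ν → ℕ // ∀ i, 0 < b i}, f b.1 / ∏ i, (b.1 i : ℝ))) := by
  change Tendsto (volDensity f) atTop (𝓝 (⨅ b : {b : Fin ν → ℕ // ∀ i, 0 < b i}, volDensity f b))
  have hbdd : BddBelow (Set.range fun b : {b : Fin ν → ℕ // ∀ i, 0 < b i} => volDensity f b) :=
    ⟨0, Set.forall_mem_range.2 fun b => volDensity_nonneg hf0 b⟩
  refine tendsto_order.2 ⟨fun c hc => ?_, fun c hc => ?_⟩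
  · filter_upwards [eventually_ge_atTop 1] with a ha
    exact hc.trans_le (ciInf_le hbdd ⟨a, ha⟩)
  · have : Nonempty {b : Fin ν → ℕ // ∀ i, 0 < b i} := ⟨⟨1, fun _ => one_pos⟩⟩
    obtain ⟨⟨b, hb⟩, hbc⟩ := exists_lt_of_ciInf_lt hc
    have hlim : Tendsto (fun a : Fin ν → ℕ => volDensity f b + C * ∑ i, (b i : ℝ) / a i) atTop
        (𝓝 (volDensity f b)) := by
      simpa using tendsto_const_nhds.add ((tendsto_sum_div_atTop_nhds_zero _).const_mul C)
    filter_upwards [hlim.eventually (gt_mem_nhds hbc), eventually_ge_atTop 1] with a hac ha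
    exact (volDensity_le_volDensity_add hC hf0 hfC hsub ha hb).trans_lt hac

/-- **Multidimensional Fekete lemma** underlying the existence of the mean entropy
(eqs. (3.6.11)–(3.6.12)): if `f` on `ν`-tuples of naturals is nonnegative, bounded by a
constant times the volume `∏ i, a i`, and subadditive in each coordinate, then
`f a / ∏ i, a i` converges, as all coordinates tend to infinity, to the infimum of
`f b / ∏ i, b i` over tuples `b` with all coordinates positive. -/
theorem multidim_fekete (ν : ℕ) (hν : 1 ≤ ν) (C : ℝ) (hC : 0 ≤ C)
    (f : (Fin ν → ℕ) → ℝ)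
    (hf0 : ∀ a, 0 ≤ f a)
    (hfC : ∀ a, f a ≤ C * ∏ i, (a i : ℝ))
    (hsub : ∀ (i : Fin ν) (a : Fin ν → ℕ) (m n : ℕ),
      f (Function.update a i (m + n)) ≤ f (Function.update a i m) + f (Function.update a i n)) :
    Tendsto (fun a : Fin ν → ℕ => f a / ∏ i, (a i : ℝ)) atTop
      (nhds (⨅ b : {b : Fin ν → ℕ // ∀ i, 0 < b i}, f b.1 / ∏ i, (b.1 i : ℝ))) :=
  multidim_fekete_general ν C hC f hf0 hfC hsub
end

section
/- (Fannes' continuity estimate for the entropy, inequality (3.6.19)) Let d ≥ 1 and let ρ₁, ρ₂ be density matrices on ℂ^d. Let λ¹, λ² : Fin d → ℝ list the eigenvalues of ρ₁ and ρ₂, respectively, with multiplicity in nondecreasing order, and set a = ∑_k |λ¹_k − λ²_k|. Then |S(ρ₁) − S(ρ₂)| ≤ a·log d + e, where e = exp(1) is Euler's number. -/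
/-! Writing `η = Real.negMulLog`, the entropy of a density matrix is `∑ η(λ_k)` over any list `λ`
of its eigenvalues, and these lie in `[0, 1]`. For `p, q ∈ [0, 1]`, subadditivity of `η` and
`η' ≥ -1` on `(0, 1]` give `|η p - η q| ≤ η |p - q| + |p - q|`. Summing over `k`, Jensen's
inequality for the concave `η` bounds `∑ η |λ¹_k - λ²_k|` by `a log d + η a`, and `η a + a ≤ 1`. -/

open Matrix Complex Polynomial
open scoped ComplexOrder

noncomputable section

namespace Real

lemma negMulLog_add_le {x y : ℝ} (hx : 0 ≤ x) (hy : 0 ≤ y) :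
    negMulLog (x + y) ≤ negMulLog x + negMulLog y := by
  have hmul_log : ∀ {a b : ℝ}, 0 ≤ a → 0 ≤ b → a * log a ≤ a * log (a + b) := fun {a b} ha hb => by
    rcases ha.eq_or_lt with rfl | ha
    · simp
    · exact mul_le_mul_of_nonneg_left (log_le_log ha (by linarith)) ha.le
  have hxy := hmul_log hx hy
  have hyx := hmul_log hy hx
  rw [add_comm y] at hyx
  simp only [negMulLog]
  linarith

lemma negMulLog_sub_negMulLog_le {p q : ℝ} (hq : 0 ≤ q) (hqp : q ≤ p) (hp : p ≤ 1) :
    negMulLog q - negMulLog p ≤ p - q := by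
  rcases hq.eq_or_lt with rfl | hq
  · linarith [negMulLog_nonneg hqp hp, negMulLog_zero]
  have hp0 : 0 < p := hq.trans_le hqp
  have hlog : q * log (p / q) ≤ p - q := by
    calc q * log (p / q) ≤ q * (p / q - 1) :=
          mul_le_mul_of_nonneg_left (log_le_sub_one_of_pos (by positivity)) hq.le
      _ = p - q := by field_simp
  have hlogp : (p - q) * log p ≤ 0 :=
    mul_nonpos_of_nonneg_of_nonpos (by linarith) (log_nonpos hp0.le hp)
  rw [log_div hp0.ne' hq.ne'] at hlog
  simp only [negMulLog]
  linarith

lemma abs_negMulLog_sub_negMulLog_le {p q : ℝ} (hp : p ∈ Set.Icc (0 : ℝ) 1)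
    (hq : q ∈ Set.Icc (0 : ℝ) 1) :
    |negMulLog p - negMulLog q| ≤ negMulLog |p - q| + |p - q| := by
  wlog hqp : q ≤ p generalizing p q
  · rw [abs_sub_comm, abs_sub_comm p]
    exact this hq hp (le_of_not_ge hqp)
  have hpq : 0 ≤ p - q := sub_nonneg.mpr hqp
  have hsub := negMulLog_add_le hq.1 hpq
  rw [add_sub_cancel] at hsub
  have hpos := negMulLog_nonneg hpq (by linarith [hp.2, hq.1])
  have hlow := negMulLog_sub_negMulLog_le hq.1 hqp hp.2
  rw [abs_of_nonneg hpq, abs_le]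
  constructor <;> linarith

lemma sum_negMulLog_le {ι : Type*} [Fintype ι] {x : ι → ℝ} (hx : ∀ i, 0 ≤ x i) :
    ∑ i, negMulLog (x i) ≤ (∑ i, x i) * log (Fintype.card ι) + negMulLog (∑ i, x i) := by
  rcases isEmpty_or_nonempty ι with hι | hι
  · simp
  set n : ℝ := (Fintype.card ι : ℝ)
  have hn : 0 < n := by positivity
  have jensen := concaveOn_negMulLog.le_map_sum (t := Finset.univ) (w := fun _ => n⁻¹) (p := x)
    (fun _ _ => by positivity) (by simp [n, Finset.card_univ]) (fun i _ => hx i)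
  simp only [smul_eq_mul, ← Finset.mul_sum] at jensen
  have hscale : n * negMulLog (n⁻¹ * ∑ i, x i) = (∑ i, x i) * log n + negMulLog (∑ i, x i) := by
    conv_rhs => rw [← mul_inv_cancel_left₀ hn.ne' (∑ i, x i), negMulLog_mul, negMulLog]
    field_simp
    ring
  calc ∑ i, negMulLog (x i) = n * (n⁻¹ * ∑ i, negMulLog (x i)) := by field_simp
    _ ≤ n * negMulLog (n⁻¹ * ∑ i, x i) := mul_le_mul_of_nonneg_left jensen hn.le
    _ = _ := hscale

theorem abs_sum_negMulLog_sub_sum_negMulLog_le {ι : Type*} [Fintype ι] {p q : ι → ℝ}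
    (hp : ∀ i, p i ∈ Set.Icc (0 : ℝ) 1) (hq : ∀ i, q i ∈ Set.Icc (0 : ℝ) 1) :
    |∑ i, negMulLog (p i) - ∑ i, negMulLog (q i)|
      ≤ (∑ i, |p i - q i|) * log (Fintype.card ι) + exp 1 := by
  set a := ∑ i, |p i - q i|
  have ha : 0 ≤ a := Finset.sum_nonneg fun i _ => abs_nonneg _
  calc |∑ i, negMulLog (p i) - ∑ i, negMulLog (q i)|
      ≤ ∑ i, (negMulLog |p i - q i| + |p i - q i|) := by
        rw [← Finset.sum_sub_distrib]
        exact (Finset.abs_sum_le_sum_abs _ _).trans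
          (Finset.sum_le_sum fun i _ => abs_negMulLog_sub_negMulLog_le (hp i) (hq i))
    _ ≤ a * log (Fintype.card ι) + (negMulLog a + a) := by
        rw [Finset.sum_add_distrib]
        linarith [sum_negMulLog_le fun i => abs_nonneg (p i - q i)]
    _ ≤ a * log (Fintype.card ι) + exp 1 := by
        linarith [negMulLog_le_one_sub_self ha, add_one_le_exp (1 : ℝ)]

end Real

namespace Matrix

variable {n ι : Type*} [Fintype n] [DecidableEq n] [Fintype ι] {A : Matrix n n ℂ} {lam : ι → ℝ}

lemma IsHermitian.map_eigenvalues_eq_of_charpoly_eq (hA : A.IsHermitian)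
    (h : A.charpoly = ∏ k, (X - C ((lam k : ℝ) : ℂ))) :
    Finset.univ.val.map hA.eigenvalues = Finset.univ.val.map lam := by
  apply Multiset.map_injective ofReal_injective
  have hroots := hA.roots_charpoly_eq_eigenvalues
  rw [h, roots_prod _ _ (Finset.prod_ne_zero_iff.mpr fun k _ => X_sub_C_ne_zero _)] at hroots
  simpa [Multiset.map_map, Function.comp_def] using hroots.symm

lemma IsHermitian.sum_comp_eigenvalues_eq_of_charpoly_eq {M : Type*} [AddCommMonoid M]
    (hA : A.IsHermitian) (h : A.charpoly = ∏ k, (X - C ((lam k : ℝ) : ℂ))) (f : ℝ → M) :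
    ∑ i, f (hA.eigenvalues i) = ∑ k, f (lam k) := by
  have := congrArg (fun s => (s.map f).sum) (hA.map_eigenvalues_eq_of_charpoly_eq h)
  simp only [Multiset.map_map] at this
  exact this

lemma IsHermitian.vnEntropy_eq_sum_negMulLog (hA : A.IsHermitian)
    (h : A.charpoly = ∏ k, (X - C ((lam k : ℝ) : ℂ))) :
    vnEntropy A = ∑ k, Real.negMulLog (lam k) := by
  rw [vnEntropy, dif_pos hA, ← hA.sum_comp_eigenvalues_eq_of_charpoly_eq h,
    ← Finset.sum_neg_distrib]
  simp only [Real.negMulLog, neg_mul]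

lemma PosSemidef.mem_Icc_of_charpoly_eq (hA : A.PosSemidef) (htr : A.trace = 1)
    (h : A.charpoly = ∏ k, (X - C ((lam k : ℝ) : ℂ))) (k : ι) : lam k ∈ Set.Icc (0 : ℝ) 1 := by
  have hmap := hA.isHermitian.map_eigenvalues_eq_of_charpoly_eq h
  have hnonneg (j : ι) : 0 ≤ lam j := by
    obtain ⟨i, -, hi⟩ :=
      Multiset.mem_map.mp (hmap ▸ Multiset.mem_map_of_mem lam (Finset.mem_univ j))
    exact hi ▸ hA.eigenvalues_nonneg i
  have hsum : ∑ j, lam j = 1 := by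
    have htr' : ∑ i, hA.isHermitian.eigenvalues i = 1 := by
      simpa using congrArg re (hA.isHermitian.trace_eq_sum_eigenvalues.symm.trans htr)
    exact (hA.isHermitian.sum_comp_eigenvalues_eq_of_charpoly_eq h id).symm.trans htr'
  exact ⟨hnonneg k, hsum ▸ Finset.single_le_sum (fun j _ => hnonneg j) (Finset.mem_univ k)⟩

end Matrix

theorem fannes_entropy_estimate_general (d : ℕ)
    (ρ₁ ρ₂ : Matrix (Fin d) (Fin d) ℂ)
    (hρ₁ : ρ₁.PosSemidef) (hρ₁tr : ρ₁.trace = 1)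
    (hρ₂ : ρ₂.PosSemidef) (hρ₂tr : ρ₂.trace = 1)
    (lam₁ lam₂ : Fin d → ℝ)
    (heig₁ : ρ₁.charpoly = ∏ k, (X - C ((lam₁ k : ℝ) : ℂ)))
    (heig₂ : ρ₂.charpoly = ∏ k, (X - C ((lam₂ k : ℝ) : ℂ))) :
    |vnEntropy ρ₁ - vnEntropy ρ₂|
      ≤ (∑ k, |lam₁ k - lam₂ k|) * Real.log d + Real.exp 1 := by
  rw [hρ₁.isHermitian.vnEntropy_eq_sum_negMulLog heig₁,
    hρ₂.isHermitian.vnEntropy_eq_sum_negMulLog heig₂]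
  simpa using Real.abs_sum_negMulLog_sub_sum_negMulLog_le
    (hρ₁.mem_Icc_of_charpoly_eq hρ₁tr heig₁) (hρ₂.mem_Icc_of_charpoly_eq hρ₂tr heig₂)

/-- **Fannes' continuity estimate for the entropy** (inequality (3.6.19)): if `λ¹, λ²` list
(in nondecreasing order, with multiplicity) the eigenvalues of the density matrices
`ρ₁, ρ₂` on `ℂ^d` and `a = ∑_k |λ¹_k - λ²_k|`, then `|S(ρ₁) - S(ρ₂)| ≤ a log d + e`. -/
theorem fannes_entropy_estimate (d : ℕ) (hd : 1 ≤ d)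
    (ρ₁ ρ₂ : Matrix (Fin d) (Fin d) ℂ)
    (hρ₁ : ρ₁.PosSemidef) (hρ₁tr : ρ₁.trace = 1)
    (hρ₂ : ρ₂.PosSemidef) (hρ₂tr : ρ₂.trace = 1)
    (lam₁ lam₂ : Fin d → ℝ) (hmono₁ : Monotone lam₁) (hmono₂ : Monotone lam₂)
    (heig₁ : ρ₁.charpoly = ∏ k, (X - C ((lam₁ k : ℝ) : ℂ)))
    (heig₂ : ρ₂.charpoly = ∏ k, (X - C ((lam₂ k : ℝ) : ℂ))) :
    |vnEntropy ρ₁ - vnEntropy ρ₂|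
      ≤ (∑ k, |lam₁ k - lam₂ k|) * Real.log d + Real.exp 1 :=
  fannes_entropy_estimate_general d ρ₁ ρ₂ hρ₁ hρ₁tr hρ₂ hρ₂tr lam₁ lam₂ heig₁ heig₂

end
end
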